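/- arXiv:0709.1334 — 2 statements merged into one kernel-verified Lean document; each statement's English description precedes it below -/
import Mathlib

section
/- Let k ≥ 1 and let A = ℂ[x, y, f_0, …, f_k] / ⟨x·f_{i−1} − y·f_i : 1 ≤ i ≤ k⟩. Then A is a reduced ring (it has no nonzero nilpotent elements). -/
/-!
The ideal `I` is the intersection of two primes: `(x, y)`, and the kernel of the monomial map
`x ↦ s, y ↦ t, f_i ↦ s^i t^(k-i) u` to `ℂ[s, t, u]`; an intersection of primes is radical.

Only `(x, y) ∩ ker ⊆ I` needs work. Modulo `I`, every polynomial reduces to normal form under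
the terminating rewriting `x f_j ↦ y f_{j+1}`, `y f_i f_j ↦ y f_{i-1} f_{j+1}` (`1 ≤ i ≤ j < k`),
and a normal monomial divisible by `x` or `y` is determined by its image: if `x` divides it, all
its `f`s are `f_k`; otherwise at most one `f_i` with `0 < i < k` occurs, and the `s`-degree
`i + k · deg_{f_k}` recovers both `i` and `deg_{f_k}`.
-/

open MvPolynomial Finset
open Finsupp (single)

namespace MvPolynomial

variable {σ τ R : Type*}

section CommSemiring

variable [CommSemiring R]

theorem aeval_monomial_monomial (w : σ → τ →₀ ℕ) (d : σ →₀ ℕ) (r : R) :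
    aeval (fun i => monomial (w i) (1 : R)) (monomial d r) =
      monomial (Finsupp.weight w d) r := by
  rw [aeval_monomial, Finsupp.weight_apply, monomial_finsupp_sum_index, C_eq_algebraMap]
  simp [monomial_pow]

theorem eq_zero_of_aeval_monomial_eq_zero {w : σ → τ →₀ ℕ} {S : Set (σ →₀ ℕ)}
    (hw : Set.InjOn (Finsupp.weight w) S) {p : MvPolynomial σ R} (hp : ↑p.support ⊆ S)
    (h : aeval (fun i => monomial (w i) (1 : R)) p = 0) : p = 0 := by
  classical
  ext d
  by_contra hd
  have hdS : d ∈ S := hp (mem_support_iff.2 hd)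
  have := congrArg (coeff (Finsupp.weight w d)) h
  rw [p.as_sum, map_sum, coeff_sum, Finset.sum_eq_single d] at this
  · rw [aeval_monomial_monomial, coeff_monomial, if_pos rfl] at this
    exact hd this
  · intro e he hed
    rw [aeval_monomial_monomial, coeff_monomial,
      if_neg fun hE => hed (hw (hp he) hdS hE)]
  · exact fun h' => (h' (mem_support_iff.2 hd)).elim

end CommSemiring

section CommRing

variable [CommRing R]

theorem monomial_add_sub_monomial_add_mem {I : Ideal (MvPolynomial σ R)} {a b : σ →₀ ℕ}
    (h : (monomial a 1 - monomial b 1 : MvPolynomial σ R) ∈ I) (e : σ →₀ ℕ) (r : R) :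
    monomial (e + a) r - monomial (e + b) r ∈ I := by
  simpa [mul_sub, monomial_mul] using I.mul_mem_left (monomial e r) h

variable (s : Set σ) [DecidablePred (· ∈ s)]

noncomputable def killVars : MvPolynomial σ R →ₐ[R] MvPolynomial σ R :=
  aeval fun i => if i ∈ s then 0 else X i

theorem killVars_monomial_of_forall {d : σ →₀ ℕ} (h : ∀ i ∈ s, d i = 0) (r : R) :
    killVars s (monomial d r) = monomial d r := by
  rw [killVars, aeval_monomial, monomial_eq, Finsupp.prod, Finsupp.prod]
  congr 1
  refine Finset.prod_congr rfl fun i hi => ?_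
  rw [if_neg fun his => Finsupp.mem_support_iff.1 hi (h i his)]

theorem killVars_monomial_of_exists {d : σ →₀ ℕ} (h : ∃ i ∈ s, d i ≠ 0) (r : R) :
    killVars s (monomial d r) = 0 := by
  obtain ⟨i, his, hi⟩ := h
  rw [killVars, aeval_monomial, Finsupp.prod, Finset.prod_eq_zero (Finsupp.mem_support_iff.2 hi)
    (by simp [his, hi]), mul_zero]

theorem sub_killVars_mem_span_X_image (p : MvPolynomial σ R) :
    p - killVars s p ∈ Ideal.span (X '' s) := by
  induction p using induction_on' with
  | monomial d r =>
    by_cases h : ∃ i ∈ s, d i ≠ 0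
    · rw [killVars_monomial_of_exists s h, sub_zero, mem_ideal_span_X_image]
      intro m hm
      rwa [Finset.mem_singleton.1 (support_monomial_subset hm)]
    · push Not at h
      rw [killVars_monomial_of_forall s h, sub_self]
      exact zero_mem _
  | add p q hp hq => simpa [add_sub_add_comm] using add_mem hp hq

theorem ker_killVars : RingHom.ker (killVars (R := R) s) = Ideal.span (X '' s) := by
  refine le_antisymm (fun p hp => ?_) ?_
  · simpa only [RingHom.mem_ker.1 hp, sub_zero] using sub_killVars_mem_span_X_image s p
  · rw [Ideal.span_le]
    rintro _ ⟨i, hi, rfl⟩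
    simp [killVars, hi]

theorem isPrime_span_X_image [IsDomain R] :
    (Ideal.span (X '' s : Set (MvPolynomial σ R))).IsPrime := by
  classical
  rw [← ker_killVars]
  exact RingHom.ker_isPrime _

end CommRing

end MvPolynomial

namespace Finset

variable {M : Type*} [AddCommMonoid M] {n : ℕ}

theorem sum_range_succ_eq_of_forall_lt {F : ℕ → M}
    (h : ∀ i < n, F i = 0) : ∑ i ∈ range (n + 1), F i = F n := by
  rw [sum_range_succ, sum_eq_zero fun i hi => h i (mem_range.1 hi), zero_add]

theorem sum_range_succ_eq_add_sum_Ico_add (hn : 1 ≤ n)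
    (F : ℕ → M) : ∑ i ∈ range (n + 1), F i = F 0 + ∑ i ∈ Ico 1 n, F i + F n := by
  rw [sum_range_succ, range_eq_Ico, sum_eq_sum_Ico_succ_bot (by omega)]

theorem sum_Ico_mul_ite_eq {j : ℕ} (hj : j < n) :
    ∑ i ∈ Ico 1 n, i * (if i = j then 1 else 0) = j := by
  simp only [mul_ite, mul_one, mul_zero, sum_ite_eq', mem_Ico]
  split_ifs <;> omega

end Finset

/-- The relation `x·f_{i-1} - y·f_i` (for `1 ≤ i ≤ k`), where in
`MvPolynomial (Fin (k+3)) ℂ` the variable `X 0` is `x`, `X 1` is `y`,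
and `X (j+2)` is `f_j` for `0 ≤ j ≤ k`.  The parameter `i : Fin k`
corresponds to the relation `x·f_i - y·f_{i+1}`. -/
noncomputable def poncRel (k : ℕ) (i : Fin k) : MvPolynomial (Fin (k + 3)) ℂ :=
  X 0 * X ⟨(i : ℕ) + 2, by have := i.isLt; omega⟩
    - X 1 * X ⟨(i : ℕ) + 3, by have := i.isLt; omega⟩

namespace PoncRel

variable {k : ℕ}

/-- The variable `f_i`; the index is clamped to `k` so that `fVar k i` is defined for every
`i : ℕ`. -/
def fVar (k i : ℕ) : Fin (k + 3) := ⟨min (i + 2) (k + 2), by omega⟩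

theorem fVar_val {i : ℕ} (hi : i ≤ k) : (fVar k i : ℕ) = i + 2 := by
  simp only [fVar]; omega

theorem fVar_inj {i j : ℕ} (hi : i ≤ k) (hj : j ≤ k) : fVar k i = fVar k j ↔ i = j := by
  rw [Fin.ext_iff, fVar_val hi, fVar_val hj]; omega

theorem fVar_ne_zero (i : ℕ) : fVar k i ≠ 0 := by
  simp [Fin.ext_iff, fVar]

theorem fVar_ne_one (i : ℕ) : fVar k i ≠ 1 := by
  simp [Fin.ext_iff, fVar]

theorem sum_univ_eq_add_sum_fVar {M : Type*} [AddCommMonoid M] (F : Fin (k + 3) → M) :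
    ∑ t, F t = F 0 + F 1 + ∑ i ∈ range (k + 1), F (fVar k i) := by
  rw [Fin.sum_univ_succ, Fin.sum_univ_succ, ← add_assoc, Fin.succ_zero_eq_one,
    ← Fin.sum_univ_eq_sum_range (fun i => F (fVar k i))]
  congr 3 with i
  congr 1
  ext
  simp [fVar]; omega

theorem ext_of_fVar {d d' : Fin (k + 3) →₀ ℕ} (h0 : d 0 = d' 0) (h1 : d 1 = d' 1)
    (hf : ∀ i ≤ k, d (fVar k i) = d' (fVar k i)) : d = d' := by
  ext t
  by_cases ht0 : t = 0
  · rwa [ht0]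
  by_cases ht1 : t = 1
  · rwa [ht1]
  simp only [Fin.ext_iff, Fin.val_zero, Fin.val_one] at ht0 ht1
  have ht : t = fVar k (t - 2) := by
    ext; rw [fVar_val (by omega)]; omega
  rw [ht]
  exact hf _ (by omega)

noncomputable abbrev poncIdeal (k : ℕ) : Ideal (MvPolynomial (Fin (k + 3)) ℂ) :=
  Ideal.span (Set.range (poncRel k))

theorem poncRel_eq {j : ℕ} (hj : j < k) :
    poncRel k ⟨j, hj⟩ = X 0 * X (fVar k j) - X 1 * X (fVar k (j + 1)) := by
  simp only [poncRel, fVar]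
  congr 4 <;> omega

theorem X_zero_mul_sub_mem {j : ℕ} (hj : j < k) :
    X 0 * X (fVar k j) - X 1 * X (fVar k (j + 1)) ∈ poncIdeal k :=
  poncRel_eq hj ▸ Ideal.subset_span ⟨⟨j, hj⟩, rfl⟩

theorem X_one_mul_sub_mem {i j : ℕ} (hi : 1 ≤ i) (hij : i ≤ j) (hj : j < k) :
    X 1 * X (fVar k i) * X (fVar k j) - X 1 * X (fVar k (i - 1)) * X (fVar k (j + 1)) ∈
      poncIdeal k := by
  have h := sub_mem (Ideal.mul_mem_left _ (X (fVar k (i - 1))) (X_zero_mul_sub_mem hj))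
    (Ideal.mul_mem_left _ (X (fVar k j)) (X_zero_mul_sub_mem (by omega : i - 1 < k)))
  rw [Nat.sub_add_cancel hi] at h
  convert h using 1
  ring

/-- Neither rewriting rule `x f_j ↦ y f_{j+1}` (`j < k`) nor `y f_i f_j ↦ y f_{i-1} f_{j+1}`
(`1 ≤ i ≤ j < k`) applies to the monomial with exponent `d`. -/
def IsNormal (k : ℕ) (d : Fin (k + 3) →₀ ℕ) : Prop :=
  (∀ j < k, ¬ single 0 1 + single (fVar k j) 1 ≤ d) ∧
    ∀ i j, 1 ≤ i → i ≤ j → j < k →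
      ¬ single 1 1 + single (fVar k i) 1 + single (fVar k j) 1 ≤ d

/-- Strictly decreased by both rewriting rules, as `t ↦ -t²` is decreasing and strictly
concave. -/
noncomputable def potential (k : ℕ) : (Fin (k + 3) →₀ ℕ) →+ ℕ :=
  Finsupp.weight fun t : Fin (k + 3) => (k + 2) ^ 2 - (t : ℕ) ^ 2

theorem potential_single (t : Fin (k + 3)) (n : ℕ) :
    potential k (single t n) = n * ((k + 2) ^ 2 - (t : ℕ) ^ 2) :=
  Finsupp.weight_single _ _ _

theorem exists_step_of_not_isNormal {d : Fin (k + 3) →₀ ℕ} (hd : ¬ IsNormal k d) :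
    ∃ d', potential k d' < potential k d ∧
      ∀ r : ℂ, monomial d r - monomial d' r ∈ poncIdeal k := by
  have hsq : ∀ m ≤ k + 2, m ^ 2 ≤ (k + 2) ^ 2 := fun m hm => Nat.pow_le_pow_left hm 2
  simp only [IsNormal, not_and_or, not_forall, not_not] at hd
  rcases hd with ⟨j, hj, hle⟩ | ⟨i, j, hi, hij, hj, hle⟩
  · obtain ⟨e, rfl⟩ := le_iff_exists_add'.1 hle
    refine ⟨e + (single 1 1 + single (fVar k (j + 1)) 1), ?_, fun r => ?_⟩
    · simp only [map_add, potential_single, fVar_val hj.le, fVar_val (by omega : j + 1 ≤ k),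
        Fin.val_zero, Fin.val_one]
      zify [hsq 0 (by omega), hsq 1 (by omega), hsq (j + 2) (by omega),
        hsq (j + 1 + 2) (by omega)]
      nlinarith
    · have h := X_zero_mul_sub_mem hj
      simp only [X, monomial_mul, mul_one] at h
      exact monomial_add_sub_monomial_add_mem h e r
  · obtain ⟨e, rfl⟩ := le_iff_exists_add'.1 hle
    refine ⟨e + (single 1 1 + single (fVar k (i - 1)) 1 +
      single (fVar k (j + 1)) 1), ?_, fun r => ?_⟩
    · simp only [map_add, potential_single, fVar_val (by omega : i ≤ k),
        fVar_val (by omega : i - 1 ≤ k), fVar_val hj.le, fVar_val (by omega : j + 1 ≤ k),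
        Fin.val_one]
      zify [hsq 1 (by omega), hsq (i + 2) (by omega), hsq (i - 1 + 2) (by omega),
        hsq (j + 2) (by omega), hsq (j + 1 + 2) (by omega), hi]
      nlinarith
    · have h := X_one_mul_sub_mem hi hij hj
      simp only [X, monomial_mul, mul_one] at h
      exact monomial_add_sub_monomial_add_mem h e r

theorem exists_isNormal_monomial_sub_mem (d : Fin (k + 3) →₀ ℕ) (r : ℂ) :
    ∃ q ∈ restrictSupport ℂ {d | IsNormal k d}, monomial d r - q ∈ poncIdeal k := by
  induction hn : potential k d using Nat.strong_induction_on generalizing d with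
  | _ n ih =>
  by_cases hd : IsNormal k d
  · exact ⟨monomial d r, by simp [hd], by simp⟩
  · obtain ⟨d', hlt, hmem⟩ := exists_step_of_not_isNormal hd
    obtain ⟨q, hq, hq'⟩ := ih _ (hn ▸ hlt) d' rfl
    exact ⟨q, hq, by simpa using add_mem (hmem r) hq'⟩

theorem exists_isNormal_sub_mem (p : MvPolynomial (Fin (k + 3)) ℂ) :
    ∃ q ∈ restrictSupport ℂ {d | IsNormal k d}, p - q ∈ poncIdeal k := by
  induction p using MvPolynomial.induction_on' with
  | monomial d r => exact exists_isNormal_monomial_sub_mem d r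
  | add p p' hp hp' =>
    obtain ⟨q, hq, h⟩ := hp
    obtain ⟨q', hq', h'⟩ := hp'
    exact ⟨q + q', add_mem hq hq', by simpa [add_sub_add_comm] using add_mem h h'⟩

theorem single_one_add_single_fVar_add_single_fVar_le {d : Fin (k + 3) →₀ ℕ} {i j : ℕ}
    (hi : i ≤ k) (hj : j ≤ k) (h1 : d 1 ≠ 0) (hdi : d (fVar k i) ≠ 0) (hdj : d (fVar k j) ≠ 0)
    (hij : i = j → 2 ≤ d (fVar k i)) :
    single 1 1 + single (fVar k i) 1 + single (fVar k j) 1 ≤ d := by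
  intro t
  simp only [Finsupp.coe_add, Pi.add_apply, Finsupp.single_apply]
  split_ifs <;> subst_vars <;> simp_all [fVar_ne_one, fVar_inj] <;> omega

theorem IsNormal.apply_fVar_eq_zero {d : Fin (k + 3) →₀ ℕ} (hd : IsNormal k d) (h0 : d 0 ≠ 0)
    {j : ℕ} (hj : j < k) : d (fVar k j) = 0 := by
  by_contra hdj
  refine hd.1 j hj fun t => ?_
  simp only [Finsupp.coe_add, Pi.add_apply, Finsupp.single_apply]
  split_ifs <;> subst_vars <;> simp_all [fVar_ne_zero] <;> omega

/-- `j = 0` encodes that no `f_i` with `0 < i < k` occurs. -/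
theorem IsNormal.exists_middle (hk : 1 ≤ k) {d : Fin (k + 3) →₀ ℕ} (hd : IsNormal k d)
    (h1 : d 1 ≠ 0) :
    ∃ j < k, ∀ i ∈ Ico 1 k, d (fVar k i) = if i = j then 1 else 0 := by
  have hle : ∀ i ∈ Ico 1 k, d (fVar k i) ≤ 1 := by
    intro i hi
    rw [mem_Ico] at hi
    by_contra h
    exact hd.2 i i hi.1 le_rfl hi.2 (single_one_add_single_fVar_add_single_fVar_le
      (by omega) (by omega) h1 (by omega) (by omega) fun _ => by omega)
  have hpair : ∀ i ∈ Ico 1 k, ∀ j ∈ Ico 1 k, i < j → d (fVar k i) = 0 ∨ d (fVar k j) = 0 := by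
    intro i hi j hj hij
    rw [mem_Ico] at hi hj
    by_contra h
    push Not at h
    exact hd.2 i j hi.1 hij.le hj.2 (single_one_add_single_fVar_add_single_fVar_le
      (by omega) (by omega) h1 h.1 h.2 (by omega))
  by_cases h : ∃ j ∈ Ico 1 k, d (fVar k j) ≠ 0
  · obtain ⟨j, hj, hdj⟩ := h
    refine ⟨j, (mem_Ico.1 hj).2, fun i hi => ?_⟩
    split_ifs with hij
    · have := hle i hi
      subst hij
      omega
    · rcases Nat.lt_or_gt_of_ne hij with hlt | hlt
      · exact (hpair i hi j hj hlt).resolve_right hdj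
      · exact (hpair j hj i hi hlt).resolve_left hdj
  · push Not at h
    exact ⟨0, by omega, fun i hi => by rw [if_neg (by simp at hi; omega)]; exact h i hi⟩

/-- Exponents of `x ↦ s`, `y ↦ t`, `f_i ↦ s^i t^(k-i) u`, the parametrisation of the component
of `Spec A` where `(x, y) ≠ 0`. -/
noncomputable def scrollWeight (k : ℕ) (t : Fin (k + 3)) : Fin 3 →₀ ℕ :=
  if t = 0 then single 0 1
  else if t = 1 then single 1 1
  else single 0 ((t : ℕ) - 2) + single 1 (k + 2 - t) + single 2 1

noncomputable def scrollParam (k : ℕ) :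
    MvPolynomial (Fin (k + 3)) ℂ →ₐ[ℂ] MvPolynomial (Fin 3) ℂ :=
  aeval fun t => monomial (scrollWeight k t) 1

theorem scrollWeight_fVar {i : ℕ} (hi : i ≤ k) :
    scrollWeight k (fVar k i) =
      single (0 : Fin 3) i + single 1 (k - i) + single 2 1 := by
  rw [scrollWeight, if_neg (fVar_ne_zero i), if_neg (fVar_ne_one i), fVar_val hi]
  congr 3; omega

theorem poncIdeal_le_ker_scrollParam : poncIdeal k ≤ RingHom.ker (scrollParam k) := by
  rw [Ideal.span_le]
  rintro _ ⟨⟨j, hj⟩, rfl⟩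
  have hw : scrollWeight k 0 + scrollWeight k (fVar k j) =
      scrollWeight k 1 + scrollWeight k (fVar k (j + 1)) := by
    rw [scrollWeight_fVar (by omega), scrollWeight_fVar (by omega)]
    ext c
    fin_cases c <;> simp [scrollWeight] <;> omega
  simp [poncRel_eq hj, scrollParam, monomial_mul, hw]

theorem weight_scrollWeight_apply (d : Fin (k + 3) →₀ ℕ) (c : Fin 3) :
    Finsupp.weight (scrollWeight k) d c =
      d 0 * single 0 1 c + d 1 * single 1 1 c +
        ∑ i ∈ range (k + 1), d (fVar k i) *
          (single 0 i + single 1 (k - i) + single 2 1 : Fin 3 →₀ ℕ) c := by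
  rw [Finsupp.weight_eq_sum, Finsupp.finsetSum_apply, sum_univ_eq_add_sum_fVar]
  refine congrArg₂ (· + ·) (by simp [scrollWeight, Finsupp.single_apply])
    (sum_congr rfl fun i hi => ?_)
  rw [Finsupp.smul_apply, scrollWeight_fVar (by simpa [Nat.lt_succ_iff] using hi), smul_eq_mul]

theorem weight_scrollWeight_apply_zero (d : Fin (k + 3) →₀ ℕ) :
    Finsupp.weight (scrollWeight k) d 0 = d 0 + ∑ i ∈ range (k + 1), i * d (fVar k i) := by
  simp [weight_scrollWeight_apply, mul_comm]

theorem weight_scrollWeight_apply_one (d : Fin (k + 3) →₀ ℕ) :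
    Finsupp.weight (scrollWeight k) d 1 = d 1 + ∑ i ∈ range (k + 1), (k - i) * d (fVar k i) := by
  simp [weight_scrollWeight_apply, mul_comm]

theorem weight_scrollWeight_apply_two (d : Fin (k + 3) →₀ ℕ) :
    Finsupp.weight (scrollWeight k) d 2 = ∑ i ∈ range (k + 1), d (fVar k i) := by
  simp [weight_scrollWeight_apply]

theorem IsNormal.apply_zero_eq_zero_iff {d : Fin (k + 3) →₀ ℕ} (hd : IsNormal k d) :
    d 0 = 0 ↔ Finsupp.weight (scrollWeight k) d 0 ≤ k * Finsupp.weight (scrollWeight k) d 2 := by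
  rw [weight_scrollWeight_apply_zero, weight_scrollWeight_apply_two, mul_sum]
  constructor
  · intro h
    rw [h, zero_add]
    exact sum_le_sum fun i hi => Nat.mul_le_mul_right _ (by simpa [Nat.lt_succ_iff] using hi)
  · intro h
    by_contra h0
    have hx : ∀ j < k, d (fVar k j) = 0 := fun j hj => hd.apply_fVar_eq_zero h0 hj
    rw [sum_range_succ_eq_of_forall_lt fun i hi => by simp [hx i hi],
      sum_range_succ_eq_of_forall_lt fun i hi => by simp [hx i hi]] at h
    omega

theorem eq_of_weight_eq_of_apply_fVar_eq {d d' : Fin (k + 3) →₀ ℕ}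
    (hE : Finsupp.weight (scrollWeight k) d = Finsupp.weight (scrollWeight k) d')
    (hf : ∀ i ≤ k, d (fVar k i) = d' (fVar k i)) : d = d' := by
  have hsum (g : ℕ → ℕ) :
      ∑ i ∈ range (k + 1), g i * d (fVar k i) = ∑ i ∈ range (k + 1), g i * d' (fVar k i) :=
    sum_congr rfl fun i hi => by rw [hf i (by simpa [Nat.lt_succ_iff] using hi)]
  have h0 := congrArg (· 0) hE
  have h1 := congrArg (· 1) hE
  simp only [weight_scrollWeight_apply_zero, weight_scrollWeight_apply_one, hsum] at h0 h1
  exact ext_of_fVar (by omega) (by omega) hf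

theorem apply_fVar_eq_of_middle (hk : 1 ≤ k) {d d' : Fin (k + 3) →₀ ℕ}
    (hE : Finsupp.weight (scrollWeight k) d = Finsupp.weight (scrollWeight k) d')
    (h0 : d 0 = 0) (h0' : d' 0 = 0) {j j' : ℕ} (hj : j < k) (hj' : j' < k)
    (hmid : ∀ i ∈ Ico 1 k, d (fVar k i) = if i = j then 1 else 0)
    (hmid' : ∀ i ∈ Ico 1 k, d' (fVar k i) = if i = j' then 1 else 0) :
    ∀ i ≤ k, d (fVar k i) = d' (fVar k i) := by
  have hA := congrArg (· 0) hE
  have hC := congrArg (· 2) hE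
  simp only [weight_scrollWeight_apply_zero, weight_scrollWeight_apply_two, h0, h0',
    sum_range_succ_eq_add_sum_Ico_add hk] at hA hC
  rw [sum_congr rfl fun i hi => by rw [hmid i hi], sum_Ico_mul_ite_eq hj,
    sum_congr rfl fun i hi => by rw [hmid' i hi], sum_Ico_mul_ite_eq hj'] at hA
  have hjj : j = j' := by
    have := congrArg (· % k) hA
    simp only [zero_mul, zero_add, Nat.add_mul_mod_self_left, Nat.mod_eq_of_lt hj,
      Nat.mod_eq_of_lt hj'] at this
    exact this
  subst hjj
  have hmid_eq : ∀ i ∈ Ico 1 k, d (fVar k i) = d' (fVar k i) :=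
    fun i hi => (hmid i hi).trans (hmid' i hi).symm
  have hlast : d (fVar k k) = d' (fVar k k) :=
    Nat.eq_of_mul_eq_mul_left (by omega : 0 < k) (by omega)
  rw [sum_congr rfl hmid_eq, hlast] at hC
  intro i hi
  rcases Nat.eq_zero_or_pos i with rfl | hi0
  · omega
  rcases hi.lt_or_eq with hik | rfl
  · exact hmid_eq i (mem_Ico.2 ⟨hi0, hik⟩)
  · exact hlast

theorem apply_fVar_eq_of_forall_lt {d d' : Fin (k + 3) →₀ ℕ}
    (hE : Finsupp.weight (scrollWeight k) d = Finsupp.weight (scrollWeight k) d')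
    (hx : ∀ i < k, d (fVar k i) = 0) (hx' : ∀ i < k, d' (fVar k i) = 0) :
    ∀ i ≤ k, d (fVar k i) = d' (fVar k i) := by
  have hC := congrArg (· 2) hE
  simp only [weight_scrollWeight_apply_two] at hC
  rw [sum_range_succ_eq_of_forall_lt hx, sum_range_succ_eq_of_forall_lt hx'] at hC
  intro i hi
  rcases hi.lt_or_eq with hik | rfl
  · rw [hx i hik, hx' i hik]
  · exact hC

theorem injOn_weight_scrollWeight (hk : 1 ≤ k) :
    Set.InjOn (Finsupp.weight (scrollWeight k)) {d | IsNormal k d ∧ (d 0 ≠ 0 ∨ d 1 ≠ 0)} := by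
  rintro d ⟨hd, hxy⟩ d' ⟨hd', hxy'⟩ hE
  refine eq_of_weight_eq_of_apply_fVar_eq hE ?_
  have h0 : d 0 = 0 ↔ d' 0 = 0 := by
    rw [hd.apply_zero_eq_zero_iff, hd'.apply_zero_eq_zero_iff, hE]
  by_cases hx : d 0 = 0
  · obtain ⟨j, hj, hmid⟩ := hd.exists_middle hk (hxy.resolve_left (not_not.2 hx))
    obtain ⟨j', hj', hmid'⟩ := hd'.exists_middle hk (hxy'.resolve_left (not_not.2 (h0.1 hx)))
    exact apply_fVar_eq_of_middle hk hE hx (h0.1 hx) hj hj' hmid hmid'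
  · exact apply_fVar_eq_of_forall_lt hE (fun i => hd.apply_fVar_eq_zero hx)
      (fun i => hd'.apply_fVar_eq_zero (mt h0.2 hx))

theorem poncIdeal_le_span_X : poncIdeal k ≤ Ideal.span (X '' {0, 1}) := by
  rw [Ideal.span_le]
  rintro _ ⟨⟨j, hj⟩, rfl⟩
  rw [poncRel_eq hj]
  exact sub_mem (Ideal.mul_mem_right _ _ (Ideal.subset_span ⟨0, by simp, rfl⟩))
    (Ideal.mul_mem_right _ _ (Ideal.subset_span ⟨1, by simp, rfl⟩))

theorem poncIdeal_eq (hk : 1 ≤ k) :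
    poncIdeal k = Ideal.span (X '' {0, 1}) ⊓ RingHom.ker (scrollParam k) := by
  refine le_antisymm (le_inf poncIdeal_le_span_X poncIdeal_le_ker_scrollParam) ?_
  rintro p ⟨hp1, hp2⟩
  obtain ⟨q, hq, hpq⟩ := exists_isNormal_sub_mem p
  have hq1 : q ∈ Ideal.span (X '' {0, 1}) := by
    simpa using sub_mem hp1 (poncIdeal_le_span_X hpq)
  have hq2 : q ∈ RingHom.ker (scrollParam k) := by
    simpa using sub_mem hp2 (poncIdeal_le_ker_scrollParam hpq)
  suffices q = 0 by simpa [this] using hpq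
  refine eq_zero_of_aeval_monomial_eq_zero (injOn_weight_scrollWeight hk)
    (fun d hd => ⟨hq hd, ?_⟩) hq2
  obtain ⟨i, hi, hdi⟩ := mem_ideal_span_X_image.1 hq1 d hd
  rcases hi with rfl | rfl
  exacts [Or.inl hdi, Or.inr hdi]

end PoncRel

theorem stmt5 (k : ℕ) (hk : 1 ≤ k) :
    IsReduced (MvPolynomial (Fin (k + 3)) ℂ ⧸ Ideal.span (Set.range (poncRel k))) := by
  rw [← Ideal.isRadical_iff_quotient_reduced, ← PoncRel.poncIdeal, PoncRel.poncIdeal_eq hk]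
  exact (isPrime_span_X_image _).isRadical.inf (RingHom.ker_isPrime _).isRadical
end

section
/- Let k ≥ 1 and A = ℂ[x, y, f_0, …, f_k] / ⟨x·f_{i−1} − y·f_i : 1 ≤ i ≤ k⟩. Then the canonical ring homomorphism ℂ[x, y] → A is injective. -/
open MvPolynomial

/-- Retraction target: send `x ↦ x`, `y ↦ y`, `f_j ↦ y^(k-j) x^j`. -/
noncomputable def poncG (k : ℕ) (j : Fin (k + 3)) : MvPolynomial (Fin 2) ℂ :=
  if (j : ℕ) = 0 then X 0
  else if (j : ℕ) = 1 then X 1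
  else X 1 ^ (k - ((j : ℕ) - 2)) * X 0 ^ ((j : ℕ) - 2)

lemma poncG_rel (k : ℕ) (i : Fin k) : aeval (poncG k) (poncRel k i) = 0 := by
  have hi := i.isLt
  simp only [poncRel, map_sub, map_mul, aeval_X, poncG]
  rw [if_neg (by omega : ¬((i:ℕ)+2 = 0)), if_neg (by omega : ¬((i:ℕ)+2 = 1)),
    if_neg (by omega : ¬((i:ℕ)+3 = 0)), if_neg (by omega : ¬((i:ℕ)+3 = 1))]
  have h2 : (i : ℕ) + 2 - 2 = (i : ℕ) := by omega
  have h3 : (i : ℕ) + 3 - 2 = (i : ℕ) + 1 := by omega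
  rw [h2, h3]
  have hk : k - (i : ℕ) = (k - ((i : ℕ) + 1)) + 1 := by omega
  rw [hk]
  norm_num [Fin.val_zero, Fin.val_one]
  ring

/-- The canonical ring homomorphism `ℂ[x,y] → A`, sending `x = X 0` and `y = X 1`
to their classes in the quotient. -/
theorem stmt6 (k : ℕ) (hk : 1 ≤ k) :
    Function.Injective
      ((Ideal.Quotient.mk (Ideal.span (Set.range (poncRel k)))).comp
        (MvPolynomial.rename (Fin.castLE (by omega : 2 ≤ k + 3))).toRingHom :
        MvPolynomial (Fin 2) ℂ →+* _) := by
  have hvanish : ∀ a ∈ Ideal.span (Set.range (poncRel k)),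
      (aeval (poncG k) : MvPolynomial (Fin (k+3)) ℂ →ₐ[ℂ] MvPolynomial (Fin 2) ℂ) a = 0 := by
    intro a ha
    have hle : Ideal.span (Set.range (poncRel k)) ≤
        RingHom.ker (aeval (poncG k) : MvPolynomial (Fin (k+3)) ℂ →ₐ[ℂ] _).toRingHom :=
      Ideal.span_le.mpr (by rintro _ ⟨i, rfl⟩; exact poncG_rel k i)
    exact hle ha
  set φ := Ideal.Quotient.lift (Ideal.span (Set.range (poncRel k)))
    ((aeval (poncG k)).toRingHom) hvanish with hφ
  intro p q h
  have h2 := congrArg φ h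
  have key : ∀ r : MvPolynomial (Fin 2) ℂ,
      φ ((Ideal.Quotient.mk (Ideal.span (Set.range (poncRel k))))
        ((rename (Fin.castLE (by omega : 2 ≤ k + 3))) r)) = r := by
    intro r
    rw [hφ, Ideal.Quotient.lift_mk]
    simp only [AlgHom.toRingHom_eq_coe, RingHom.coe_coe]
    rw [aeval_rename]
    have : (poncG k ∘ Fin.castLE (by omega : 2 ≤ k + 3)) = X := by
      funext j
      fin_cases j <;> simp [poncG, Fin.castLE]
    rw [this]
    exact aeval_X_left_apply r
  simpa [key] using h2
end
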